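/- arXiv:1812.03089 — 4 statements merged into one kernel-verified Lean document; each statement's English description precedes it below -/
import Mathlib

section
/- Let n be a positive natural number, let x, y ∈ ℝⁿ be nonzero vectors, and let ε be a real number with 0 < ε ≤ 1/4. Suppose X̄, Ȳ ≥ 0 are real numbers satisfying |X̄ − ‖x‖| ≤ (ε/3)‖x‖ and |Ȳ − ‖y‖| ≤ (ε/3)‖y‖, and suppose s ∈ ℝ satisfies |s − ⟨x,y⟩/(‖x‖‖y‖)| ≤ (ε/4)·|⟨x,y⟩|/(‖x‖‖y‖). Then the estimator s' := X̄·Ȳ·s satisfies |s' − ⟨x,y⟩| ≤ ε·|⟨x,y⟩|. -/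
open RealInnerProductSpace

/-- Relative errors compose under multiplication: `(1 + α) (1 + β) - 1 = α + β + α β`. -/
theorem norm_mul_sub_mul_le {R : Type*} [SeminormedRing R] {P p Q q : R} {α β : ℝ}
    (hP : ‖P - p‖ ≤ α * ‖p‖) (hQ : ‖Q - q‖ ≤ β * ‖q‖) :
    ‖P * Q - p * q‖ ≤ (α + β + α * β) * (‖p‖ * ‖q‖) := by
  have hsplit : P * Q - p * q = (P - p) * q + p * (Q - q) + (P - p) * (Q - q) := by noncomm_ring
  calc ‖P * Q - p * q‖
      ≤ ‖P - p‖ * ‖q‖ + ‖p‖ * ‖Q - q‖ + ‖P - p‖ * ‖Q - q‖ := by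
        rw [hsplit]
        exact (norm_add₃_le).trans
          (add_le_add_three (norm_mul_le _ _) (norm_mul_le _ _) (norm_mul_le _ _))
    _ ≤ α * ‖p‖ * ‖q‖ + ‖p‖ * (β * ‖q‖) + α * ‖p‖ * (β * ‖q‖) := by
        have hα : 0 ≤ α * ‖p‖ := (norm_nonneg _).trans hP
        gcongr
    _ = (α + β + α * β) * (‖p‖ * ‖q‖) := by ring

theorem ripe_relative_error_general
    {n : ℕ} (x y : EuclideanSpace ℝ (Fin n)) (hx : x ≠ 0) (hy : y ≠ 0)
    (ε : ℝ) (hε : 0 < ε) (hε4 : ε ≤ 1 / 4)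
    (Xbar Ybar : ℝ)
    (hXbar : |Xbar - ‖x‖| ≤ ε / 3 * ‖x‖) (hYbar : |Ybar - ‖y‖| ≤ ε / 3 * ‖y‖)
    (s : ℝ) (hs : |s - ⟪x, y⟫ / (‖x‖ * ‖y‖)| ≤ ε / 4 * |⟪x, y⟫| / (‖x‖ * ‖y‖)) :
    |Xbar * Ybar * s - ⟪x, y⟫| ≤ ε * |⟪x, y⟫| := by
  have hnorms : ‖x‖ * ‖y‖ ≠ 0 := mul_ne_zero (norm_ne_zero_iff.mpr hx) (norm_ne_zero_iff.mpr hy)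
  have hX : ‖Xbar - ‖x‖‖ ≤ ε / 3 * ‖‖x‖‖ := by rwa [norm_norm, Real.norm_eq_abs]
  have hY : ‖Ybar - ‖y‖‖ ≤ ε / 3 * ‖‖y‖‖ := by rwa [norm_norm, Real.norm_eq_abs]
  have hs' : ‖s - ⟪x, y⟫ / (‖x‖ * ‖y‖)‖ ≤ ε / 4 * ‖⟪x, y⟫ / (‖x‖ * ‖y‖)‖ := by
    rwa [Real.norm_eq_abs, Real.norm_eq_abs, abs_div, abs_of_nonneg (by positivity : 0 ≤ ‖x‖ * ‖y‖),
      ← mul_div_assoc]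
  -- The estimator multiplies the estimate `Xbar * Ybar` of `‖x‖ * ‖y‖` by the estimate `s` of
  -- `⟪x, y⟫ / (‖x‖ * ‖y‖)`, so the relative errors compose twice.
  have hXY := norm_mul_sub_mul_le hX hY
  rw [← norm_mul ‖x‖ ‖y‖] at hXY
  have hXYs := norm_mul_sub_mul_le hXY hs'
  rw [← norm_mul (‖x‖ * ‖y‖), mul_div_cancel₀ _ hnorms, Real.norm_eq_abs, Real.norm_eq_abs] at hXYs
  have hbudget : ε / 3 + ε / 3 + ε / 3 * (ε / 3) + ε / 4
      + (ε / 3 + ε / 3 + ε / 3 * (ε / 3)) * (ε / 4) ≤ ε := by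
    nlinarith
  exact hXYs.trans (mul_le_mul_of_nonneg_right hbudget (abs_nonneg _))

theorem ripe_relative_error
    {n : ℕ} (hn : 0 < n) (x y : EuclideanSpace ℝ (Fin n)) (hx : x ≠ 0) (hy : y ≠ 0)
    (ε : ℝ) (hε : 0 < ε) (hε4 : ε ≤ 1 / 4)
    (Xbar Ybar : ℝ) (hXbar0 : 0 ≤ Xbar) (hYbar0 : 0 ≤ Ybar)
    (hXbar : |Xbar - ‖x‖| ≤ ε / 3 * ‖x‖) (hYbar : |Ybar - ‖y‖| ≤ ε / 3 * ‖y‖)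
    (s : ℝ) (hs : |s - ⟪x, y⟫ / (‖x‖ * ‖y‖)| ≤ ε / 4 * |⟪x, y⟫| / (‖x‖ * ‖y‖)) :
    |Xbar * Ybar * s - ⟪x, y⟫| ≤ ε * |⟪x, y⟫| :=
  ripe_relative_error_general x y hx hy ε hε hε4 Xbar Ybar hXbar hYbar s hs
end

section
/- Let n be a positive natural number, let x, y ∈ ℝⁿ be nonzero vectors, and let ε be a real number with 0 < ε ≤ 1/4. Suppose X̄, Ȳ ≥ 0 are real numbers satisfying |X̄ − ‖x‖| ≤ (ε/3)‖x‖ and |Ȳ − ‖y‖| ≤ (ε/3)‖y‖, and suppose s ∈ ℝ satisfies |s − ⟨x,y⟩/(‖x‖‖y‖)| ≤ ε·max{1, |⟨x,y⟩|}/(4‖x‖‖y‖). Then the estimator s' := X̄·Ȳ·s satisfies |s' − ⟨x,y⟩| ≤ ε·max{1, |⟨x,y⟩|}. -/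
open RealInnerProductSpace

set_option maxHeartbeats 1000000 in
theorem ripe_combined_error
    {n : ℕ} (hn : 0 < n) (x y : EuclideanSpace ℝ (Fin n)) (hx : x ≠ 0) (hy : y ≠ 0)
    (ε : ℝ) (hε : 0 < ε) (hε4 : ε ≤ 1 / 4)
    (Xbar Ybar : ℝ) (hXbar0 : 0 ≤ Xbar) (hYbar0 : 0 ≤ Ybar)
    (hXbar : |Xbar - ‖x‖| ≤ ε / 3 * ‖x‖) (hYbar : |Ybar - ‖y‖| ≤ ε / 3 * ‖y‖)
    (s : ℝ)
    (hs : |s - ⟪x, y⟫ / (‖x‖ * ‖y‖)| ≤ ε * max 1 |⟪x, y⟫| / (4 * ‖x‖ * ‖y‖)) :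
    |Xbar * Ybar * s - ⟪x, y⟫| ≤ ε * max 1 |⟪x, y⟫| := by
  set a := ‖x‖ with ha'
  set b := ‖y‖ with hb'
  set t := ⟪x, y⟫ with ht'
  set M := max 1 |t| with hM'
  have ha : 0 < a := norm_pos_iff.mpr hx
  have hb : 0 < b := norm_pos_iff.mpr hy
  have hab : 0 < a * b := mul_pos ha hb
  have hM1 : (1 : ℝ) ≤ M := le_max_left _ _
  have hMt : |t| ≤ M := le_max_right _ _
  have hM0 : 0 < M := lt_of_lt_of_le one_pos hM1
  have h1 : |a * b * s - t| ≤ ε * M / 4 := by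
    have heq : a * b * s - t = (a * b) * (s - t / (a * b)) := by
      field_simp
    rw [heq, abs_mul, abs_of_pos hab]
    calc a * b * |s - t / (a * b)| ≤ a * b * (ε * M / (4 * a * b)) :=
          mul_le_mul_of_nonneg_left hs (le_of_lt hab)
      _ = ε * M / 4 := by field_simp
  rw [abs_le] at hXbar hYbar
  have hXu : Xbar ≤ a + ε / 3 * a := by linarith [hXbar.2]
  have hXl : a - ε / 3 * a ≤ Xbar := by linarith [hXbar.1]
  have hYu : Ybar ≤ b + ε / 3 * b := by linarith [hYbar.2]
  have hYl : b - ε / 3 * b ≤ Ybar := by linarith [hYbar.1]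
  have hXY : 0 ≤ Xbar * Ybar := mul_nonneg hXbar0 hYbar0
  have hXYub : Xbar * Ybar ≤ (1 + ε/3)^2 * (a*b) := by nlinarith
  have hbl0 : 0 ≤ b - ε/3*b := by nlinarith
  have hXYlb : (1 - ε/3)^2 * (a*b) ≤ Xbar * Ybar := by
    nlinarith [mul_le_mul hXl hYl hbl0 hXbar0]
  have hdiff : |Xbar * Ybar - a * b| ≤ ε/3 * (2 + ε/3) * (a*b) := by
    rw [abs_le]; constructor <;> nlinarith
  have hterm1 : Xbar * Ybar * |a*b*s - t| ≤ (1 + ε/3)^2 * (a*b) * (ε * M / 4) :=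
    mul_le_mul hXYub h1 (abs_nonneg _) (by positivity)
  have hterm2 : |Xbar * Ybar - a*b| * |t| ≤ ε/3 * (2 + ε/3) * (a*b) * M :=
    mul_le_mul hdiff hMt (abs_nonneg _) (by positivity)
  have hcoef : (1 + ε/3)^2 * (ε * M / 4) + ε/3 * (2 + ε/3) * M ≤ ε * M := by
    nlinarith [mul_pos hε hM0, mul_nonneg (mul_nonneg hε.le hε.le) hM0.le,
      mul_nonneg (mul_nonneg (mul_nonneg hε.le hε.le) hε.le) hM0.le]
  have key : |a * b * (Xbar * Ybar * s - t)| ≤ a * b * (ε * M) := by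
    have hid : a*b*(Xbar*Ybar*s - t) = Xbar*Ybar*(a*b*s - t) + (Xbar*Ybar - a*b)*t := by
      ring
    rw [hid]
    calc |Xbar*Ybar*(a*b*s - t) + (Xbar*Ybar - a*b)*t|
        ≤ |Xbar*Ybar*(a*b*s - t)| + |(Xbar*Ybar - a*b)*t| := abs_add_le _ _
      _ = Xbar*Ybar*|a*b*s - t| + |Xbar*Ybar - a*b| * |t| := by
          rw [abs_mul (Xbar*Ybar), abs_mul (Xbar*Ybar - a*b), abs_of_nonneg hXY]
      _ ≤ (1 + ε/3)^2 * (a*b) * (ε * M / 4) + ε/3 * (2 + ε/3) * (a*b) * M := by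
          linarith
      _ ≤ a * b * (ε * M) := by nlinarith
  rw [abs_mul, abs_of_pos hab] at key
  exact le_of_mul_le_mul_left key hab
end

section
/- Let t, M, n be positive natural numbers. Let X be a real t×M matrix all of whose entries are nonzero, for each (τ,μ) ∈ {1,…,t}×{1,…,M} let a^{τ,μ} ∈ ℝⁿ be a vector all of whose components are nonzero, and let v ∈ ℝⁿ. For each triple (k,τ,μ) define Z(k,τ,μ) = v_k·(‖a^{τ,μ}‖/a^{τ,μ}_k)·(‖X‖_F²/X_{τμ}). Then the second moment of Z under the distribution P(k,τ,μ) = (X_{τμ}²/‖X‖_F²)·((a^{τ,μ}_k)²/‖a^{τ,μ}‖²) satisfies Σ_{τ,μ,k} P(k,τ,μ)·Z(k,τ,μ)² = t·M·‖v‖²·‖X‖_F², and consequently the variance of Z satisfies Var(Z) ≤ t·M·‖v‖²·‖X‖_F². -/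
/-- Second moment and variance bound for the random variable of the
quantum-inspired classical inner product estimation procedure. -/
theorem quantum_inspired_ipe_variance
    {t M n : ℕ} (ht : 0 < t) (hM : 0 < M) (hn : 0 < n)
    (X : Matrix (Fin t) (Fin M) ℝ) (hX : ∀ τ μ, X τ μ ≠ 0)
    (a : Fin t → Fin M → EuclideanSpace ℝ (Fin n)) (ha : ∀ τ μ k, a τ μ k ≠ 0)
    (v : EuclideanSpace ℝ (Fin n))
    (XF : ℝ) (hXF : XF = Real.sqrt (∑ τ, ∑ μ, (X τ μ) ^ 2))
    (Z : Fin n → Fin t → Fin M → ℝ)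
    (hZ : ∀ k τ μ, Z k τ μ = v k * (‖a τ μ‖ / a τ μ k) * (XF ^ 2 / X τ μ))
    (P : Fin n → Fin t → Fin M → ℝ)
    (hP : ∀ k τ μ, P k τ μ = (X τ μ) ^ 2 / XF ^ 2 * ((a τ μ k) ^ 2 / ‖a τ μ‖ ^ 2)) :
    (∑ τ, ∑ μ, ∑ k, P k τ μ * (Z k τ μ) ^ 2 = t * M * ‖v‖ ^ 2 * XF ^ 2) ∧
    (∑ τ, ∑ μ, ∑ k, P k τ μ * (Z k τ μ) ^ 2)
        - (∑ τ, ∑ μ, ∑ k, P k τ μ * Z k τ μ) ^ 2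
      ≤ t * M * ‖v‖ ^ 2 * XF ^ 2 := by
  have hXF2 : XF ^ 2 = ∑ τ, ∑ μ, (X τ μ) ^ 2 := by
    rw [hXF, Real.sq_sqrt]
    positivity
  have hXFne : XF ^ 2 ≠ 0 := by
    rw [hXF2]
    have hpos : (0:ℝ) < ∑ τ, ∑ μ, (X τ μ) ^ 2 := by
      obtain ⟨τ0⟩ := Fin.pos_iff_nonempty.mp ht
      obtain ⟨μ0⟩ := Fin.pos_iff_nonempty.mp hM
      apply Finset.sum_pos' (fun τ _ => Finset.sum_nonneg fun μ _ => sq_nonneg _)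
      exact ⟨τ0, Finset.mem_univ _, Finset.sum_pos' (fun μ _ => sq_nonneg _)
        ⟨μ0, Finset.mem_univ _, (sq_nonneg _).lt_of_ne (Ne.symm (pow_ne_zero 2 (hX τ0 μ0)))⟩⟩
    exact hpos.ne'
  have hane : ∀ τ μ, ‖a τ μ‖ ≠ 0 := by
    intro τ μ h
    obtain ⟨k0⟩ := Fin.pos_iff_nonempty.mp hn
    have h0 := norm_eq_zero.mp h
    exact ha τ μ k0 (by rw [h0]; rfl)
  have key : ∀ τ μ k, P k τ μ * (Z k τ μ) ^ 2 = (v k) ^ 2 * XF ^ 2 := by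
    intro τ μ k
    have hXF0 : XF ≠ 0 := fun h => hXFne (by rw [h]; ring)
    rw [hP, hZ]
    field_simp [hX τ μ, ha τ μ k, hane τ μ, hXF0]
  have hsum : ∑ τ, ∑ μ, ∑ k, P k τ μ * (Z k τ μ) ^ 2 = t * M * ‖v‖ ^ 2 * XF ^ 2 := by
    have hv : ‖v‖ ^ 2 = ∑ k, (v k) ^ 2 := by
      rw [EuclideanSpace.norm_eq, Real.sq_sqrt (by positivity)]
      simp [sq_abs]
    simp only [key, ← Finset.sum_mul, ← hv]
    simp [Finset.sum_const, mul_comm, mul_assoc, mul_left_comm]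
  refine ⟨hsum, ?_⟩
  rw [hsum]
  nlinarith [sq_nonneg (∑ τ, ∑ μ, ∑ k, P k τ μ * Z k τ μ)]
end

section
/- Let μ, σ, ε', γ be real numbers with σ > 0, ε' > 0, and 0 < γ < 1. Let n and Q be positive natural numbers with n ≥ 4/ε'², Q odd, and Q ≥ 8·ln(1/γ). Let (Z_{q,i}) for q ∈ {1,…,Q}, i ∈ {1,…,n} be independent identically distributed real-valued square-integrable random variables, each with mean μ and variance at most σ². For each q let Z̄_q = (1/n)·Σ_{i=1}^{n} Z_{q,i}, and let S be the median of Z̄₁, …, Z̄_Q. Then ℙ(|S − μ| ≤ ε'·σ) ≥ 1 − γ. -/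
open MeasureTheory ProbabilityTheory

/-- The median of a finite family of reals: the `(Q/2)`-th element (0-indexed) of
the sorted list, i.e. for odd `Q` the `((Q+1)/2)`-th smallest value. -/
noncomputable def median {Q : ℕ} (z : Fin Q → ℝ) : ℝ :=
  ((List.ofFn z).insertionSort (· ≤ ·)).getD (Q / 2) 0

/-!
Each row mean `Z̄_q` has variance at most `σ² / n ≤ (ε'σ)² / 4`, so by Chebyshev it leaves
`[μ - ε'σ, μ + ε'σ]` with probability at most `1/4`. The rows are independent, hence so are the
indicators of these bad events, and by Hoeffding's inequality at least half of them occur with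
probability at most `exp (-Q/8) ≤ γ`. Otherwise fewer than half of the `Z̄_q` lie outside the
interval, and then the middle order statistic lies inside it.
-/

open Finset
open scoped NNReal

namespace List

variable {α : Type*} [LinearOrder α] {l : List α}

lemma Pairwise.succ_le_countP_le_getElem (hl : l.Pairwise (· ≤ ·)) {k : ℕ}
    (hk : k < l.length) :
    k + 1 ≤ l.countP (· ≤ l[k]) := by
  have hle : ∀ x ∈ l.take (k + 1), x ≤ l[k] := by
    intro x hx
    obtain ⟨j, hj, rfl⟩ := mem_take_iff_getElem.mp hx
    exact hl.rel_get_of_le (a := ⟨j, by omega⟩) (b := ⟨k, hk⟩)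
      (by simp only [Fin.mk_le_mk]; omega)
  refine le_trans (le_of_eq ?_) (take_sublist (k + 1) l).countP_le
  rw [countP_eq_length.mpr (by simpa using hle), length_take]
  omega

lemma Pairwise.length_sub_le_countP_getElem_le (hl : l.Pairwise (· ≤ ·)) {k : ℕ}
    (hk : k < l.length) :
    l.length - k ≤ l.countP (l[k] ≤ ·) := by
  have hle : ∀ x ∈ l.drop k, l[k] ≤ x := by
    intro x hx
    obtain ⟨j, hj, rfl⟩ := mem_drop_iff_getElem.mp hx
    exact hl.rel_get_of_le (a := ⟨k, hk⟩) (b := ⟨k + j, by omega⟩)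
      (by simp only [Fin.mk_le_mk]; omega)
  refine le_trans (le_of_eq ?_) (drop_sublist k l).countP_le
  rw [countP_eq_length.mpr (by simpa using hle), length_drop]

lemma countP_ofFn {β : Type*} {Q : ℕ} (z : Fin Q → β) (p : β → Prop) [DecidablePred p] :
    (ofFn z).countP p = #{q | p (z q)} := by
  rw [← Multiset.coe_countP, ← Fin.univ_val_map, Multiset.countP_map]
  rfl

end List

section Median

variable {Q : ℕ} (z : Fin Q → ℝ)

lemma median_eq_getElem (hQ : 0 < Q) :
    median z = ((List.ofFn z).insertionSort (· ≤ ·))[Q / 2]'(by simp; omega) :=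
  List.getD_eq_getElem _ _ _

lemma succ_half_le_card_le_median (hQ : 0 < Q) :
    Q / 2 + 1 ≤ #{q | z q ≤ median z} := by
  have := (List.pairwise_insertionSort (· ≤ ·) (List.ofFn z)).succ_le_countP_le_getElem
    (k := Q / 2) (by simp; omega)
  rwa [← median_eq_getElem z hQ, (List.perm_insertionSort _ _).countP_eq,
    List.countP_ofFn] at this

lemma sub_half_le_card_median_le (hQ : 0 < Q) :
    Q - Q / 2 ≤ #{q | median z ≤ z q} := by
  have := (List.pairwise_insertionSort (· ≤ ·) (List.ofFn z)).length_sub_le_countP_getElem_le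
    (k := Q / 2) (by simp; omega)
  rwa [← median_eq_getElem z hQ, (List.perm_insertionSort _ _).countP_eq, List.countP_ofFn,
    List.length_insertionSort, List.length_ofFn] at this

lemma median_mem_Icc {a b : ℝ} (h : 2 * #{q | z q ∉ Set.Icc a b} < Q) :
    median z ∈ Set.Icc a b := by
  have hQ : 0 < Q := by omega
  by_contra hmed
  rcases not_and_or.mp hmed with ha | hb
  · have := (succ_half_le_card_le_median z hQ).trans <|
      card_le_card (t := {q | z q ∉ Set.Icc a b}) <|
        monotone_filter_right _ fun q _ hq hab ↦ ha (hab.1.trans hq)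
    omega
  · have := (sub_half_le_card_median_le z hQ).trans <|
      card_le_card (t := {q | z q ∉ Set.Icc a b}) <|
        monotone_filter_right _ fun q _ hq hab ↦ hb (hq.trans hab.2)
    omega

end Median

/-- Converse of `iIndepFun_uncurry'`. The joint laws are compared as product measures: currying
turns the product over pairs into the product of the row products. -/
lemma ProbabilityTheory.iIndepFun.curry {Ω ι κ : Type*} {mΩ : MeasurableSpace Ω} {P : Measure Ω}
    {𝓧 : ι → κ → Type*} {m𝓧 : ∀ i j, MeasurableSpace (𝓧 i j)}
    {X : (i : ι) → (j : κ) → Ω → 𝓧 i j} (mX : ∀ i j, Measurable (X i j))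
    (h : iIndepFun (fun (p : ι × κ) ω ↦ X p.1 p.2 ω) P) :
    iIndepFun (fun i ω ↦ (X i · ω)) P := by
  have := h.isProbabilityMeasure
  have : ∀ i j, IsProbabilityMeasure (P.map (X i j)) :=
    fun i j ↦ Measure.isProbabilityMeasure_map (mX i j).aemeasurable
  have hsigma : iIndepFun (fun (p : (_ : ι) × κ) ω ↦ X p.1 p.2 ω) P :=
    h.precomp (Equiv.sigmaEquivProd ι κ).injective
  have hrow : ∀ i, iIndepFun (X i) P :=
    fun i ↦ h.precomp (g := Prod.mk i) (Prod.mk_right_injective i)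
  have hcurry :
      (MeasurableEquiv.piCurry 𝓧) ∘ (fun ω p ↦ X p.1 p.2 ω) = fun ω i j ↦ X i j ω := by
    ext; simp [Sigma.curry]
  rw [iIndepFun_iff_map_fun_eq_infinitePi_map (by fun_prop)]
  rw [iIndepFun_iff_map_fun_eq_infinitePi_map (by fun_prop)] at hsigma
  have := congrArg (Measure.map (MeasurableEquiv.piCurry 𝓧)) hsigma
  rw [Measure.map_map (by fun_prop) (by fun_prop), hcurry,
    Measure.infinitePi_map_piCurry (fun i j ↦ P.map (X i j))] at this
  rw [this]
  congr with i : 1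
  rw [(iIndepFun_iff_map_fun_eq_infinitePi_map (by fun_prop)).1 (hrow i)]

lemma measureReal_card_div_two_le_sum_le {Ω ι : Type*} {mΩ : MeasurableSpace Ω} {P : Measure Ω}
    [Fintype ι] {X : ι → Ω → ℝ} (hindep : iIndepFun X P) (hmeas : ∀ i, Measurable (X i))
    (hbound : ∀ i, ∀ᵐ ω ∂P, X i ω ∈ Set.Icc 0 1) (hmean : ∀ i, P[X i] ≤ 1 / 4) :
    P.real {ω | (Fintype.card ι : ℝ) / 2 ≤ ∑ i, X i ω}
      ≤ Real.exp (-(Fintype.card ι) / 8) := by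
  have := hindep.isProbabilityMeasure
  set N : ℝ := (Fintype.card ι : ℝ)
  have hcentred : iIndepFun (fun i ω ↦ X i ω - P[X i]) P :=
    hindep.comp (fun i y ↦ y - ∫ ω, X i ω ∂P) fun i ↦ measurable_sub_const _
  have hsubG :
      ∀ i ∈ (univ : Finset ι), HasSubgaussianMGF (fun ω ↦ X i ω - P[X i]) (1 / 4) P := fun i _ ↦ by
      convert hasSubgaussianMGF_of_mem_Icc (hmeas i).aemeasurable (hbound i)
      norm_num
  have hoeffding := HasSubgaussianMGF.measure_sum_ge_le_of_iIndepFun hcentred hsubG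
    (ε := N / 4) (by positivity)
  refine le_trans (measureReal_mono fun ω hω ↦ ?_) (hoeffding.trans_eq ?_)
  · have hsum_mean : ∑ i, P[X i] ≤ N / 4 :=
      calc ∑ i, P[X i] ≤ ∑ _i : ι, (1 / 4 : ℝ) := sum_le_sum fun i _ ↦ hmean i
        _ = N / 4 := by simp [N, div_eq_mul_one_div N]
    simp only [Set.mem_ofPred_eq, sum_sub_distrib] at hω ⊢
    linarith
  · have hproxy : ((∑ _i : ι, (1 / 4 : ℝ≥0) : ℝ≥0) : ℝ) = N / 4 := by
      simp [N, div_eq_mul_one_div N]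
    rw [hproxy]
    rcases eq_or_ne N 0 with hN | hN
    · simp [hN]
    · congr 1
      field_simp
      ring

section SampleMean

variable {Ω ι : Type*} {mΩ : MeasurableSpace Ω} {P : Measure Ω} [Fintype ι] {Z : ι → Ω → ℝ}

lemma integral_mean_eq [Nonempty ι] (hint : ∀ i, Integrable (Z i) P) {μ : ℝ}
    (hmean : ∀ i, P[Z i] = μ) :
    ∫ ω, (1 / Fintype.card ι : ℝ) * ∑ i, Z i ω ∂P = μ := by
  rw [integral_const_mul, integral_finsetSum _ fun i _ ↦ hint i]
  simp [hmean]

lemma variance_mean_le [IsFiniteMeasure P] (hL2 : ∀ i, MemLp (Z i) 2 P)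
    (hindep : Pairwise fun i j ↦ IndepFun (Z i) (Z j) P) {σ : ℝ}
    (hvar : ∀ i, variance (Z i) P ≤ σ ^ 2) :
    variance (fun ω ↦ (1 / Fintype.card ι : ℝ) * ∑ i, Z i ω) P ≤ σ ^ 2 / Fintype.card ι := by
  have hsum : variance (fun ω ↦ ∑ i, Z i ω) P = ∑ i, variance (Z i) P := by
    rw [← Finset.sum_fn]
    exact IndepFun.variance_sum (fun i _ ↦ hL2 i) fun i _ j _ hij ↦ hindep hij
  rw [variance_const_mul, hsum]
  calc (1 / Fintype.card ι : ℝ) ^ 2 * ∑ i, variance (Z i) P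
      ≤ (1 / Fintype.card ι : ℝ) ^ 2 * (Fintype.card ι * σ ^ 2) := by
        gcongr
        simpa using sum_le_sum fun i (_ : i ∈ univ) ↦ hvar i
    _ = σ ^ 2 / Fintype.card ι := by
        rcases eq_or_ne (Fintype.card ι : ℝ) 0 with h | h
        · simp [h]
        · field_simp

lemma measureReal_mean_notMem_Icc_le [IsFiniteMeasure P] [Nonempty ι]
    (hL2 : ∀ i, MemLp (Z i) 2 P) (hindep : Pairwise fun i j ↦ IndepFun (Z i) (Z j) P)
    {μ σ : ℝ} (hmean : ∀ i, P[Z i] = μ) (hvar : ∀ i, variance (Z i) P ≤ σ ^ 2)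
    {c : ℝ} (hc : 0 < c) :
    P.real {ω | (1 / Fintype.card ι : ℝ) * ∑ i, Z i ω ∉ Set.Icc (μ - c) (μ + c)}
      ≤ σ ^ 2 / (Fintype.card ι * c ^ 2) := by
  set mean : Ω → ℝ := fun ω ↦ (1 / Fintype.card ι : ℝ) * ∑ i, Z i ω
  have hL2mean : MemLp mean 2 P := by
    simpa [Finset.sum_apply] using (memLp_finsetSum' univ fun i _ ↦ hL2 i).const_mul _
  have hchebyshev := meas_ge_le_variance_div_sq hL2mean hc
  rw [integral_mean_eq (fun i ↦ (hL2 i).integrable one_le_two) hmean] at hchebyshev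
  calc P.real {ω | mean ω ∉ Set.Icc (μ - c) (μ + c)}
      ≤ P.real {ω | c ≤ |mean ω - μ|} := by
        refine measureReal_mono fun ω hω ↦ ?_
        rw [Set.mem_ofPred_eq, ← Set.mem_Icc_iff_abs_le, abs_sub_comm, not_le] at hω
        exact hω.le
    _ ≤ variance mean P / c ^ 2 :=
        ENNReal.toReal_le_of_le_ofReal (div_nonneg (variance_nonneg _ _) (sq_nonneg c))
          hchebyshev
    _ ≤ σ ^ 2 / Fintype.card ι / c ^ 2 := by gcongr; exact variance_mean_le hL2 hindep hvar
    _ = σ ^ 2 / (Fintype.card ι * c ^ 2) := by rw [div_div]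

end SampleMean

lemma measureReal_median_notMem_Icc_le {Ω : Type*} {mΩ : MeasurableSpace Ω} {P : Measure Ω}
    {Q : ℕ} {W : Fin Q → Ω → ℝ} (hindep : iIndepFun W P) (hmeas : ∀ q, Measurable (W q))
    {a b : ℝ} (hbad : ∀ q, P.real {ω | W q ω ∉ Set.Icc a b} ≤ 1 / 4) :
    P.real {ω | median (W · ω) ∉ Set.Icc a b} ≤ Real.exp (-Q / 8) := by
  have := hindep.isProbabilityMeasure
  set bad : ℝ → ℝ := (Set.Icc a b)ᶜ.indicator 1
  have hbad_meas : Measurable bad := measurable_const.indicator measurableSet_Icc.compl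
  have hhoeffding := measureReal_card_div_two_le_sum_le (X := fun q ↦ bad ∘ W q)
    (hindep.comp (fun _ ↦ bad) fun _ ↦ hbad_meas) (fun q ↦ hbad_meas.comp (hmeas q))
    (fun q ↦ ae_of_all _ fun ω ↦ ⟨Set.indicator_nonneg (fun _ _ ↦ zero_le_one) _,
      Set.indicator_le_self' (fun _ _ ↦ zero_le_one) _⟩)
    (fun q ↦ ?_)
  · rw [Fintype.card_fin] at hhoeffding
    refine le_trans (measureReal_mono fun ω hω ↦ ?_) hhoeffding
    have hcard : (Q : ℝ) ≤ 2 * #{q | W q ω ∉ Set.Icc a b} := by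
      exact_mod_cast not_lt.mp (mt (median_mem_Icc (W · ω)) hω)
    simp only [Set.mem_ofPred_eq, Function.comp_apply, bad, Set.indicator_apply,
      Set.mem_compl_iff, Pi.one_apply, sum_boole]
    linarith
  · calc P[bad ∘ W q] = P.real (W q ⁻¹' (Set.Icc a b)ᶜ) := by
          rw [← integral_indicator_one ((hmeas q) measurableSet_Icc.compl)]
          rfl
      _ ≤ 1 / 4 := hbad q

lemma ofReal_one_sub_le_measure_compl {Ω : Type*} {mΩ : MeasurableSpace Ω} {P : Measure Ω}
    [IsProbabilityMeasure P] {s : Set Ω} {γ : ℝ} (h : P.real s ≤ γ) :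
    ENNReal.ofReal (1 - γ) ≤ P sᶜ := by
  have hcover : 1 ≤ P.real s + P.real sᶜ := by
    simpa [Set.union_compl_self] using measureReal_union_le (μ := P) s sᶜ
  exact ENNReal.ofReal_le_of_le_toReal (by rw [← measureReal_def]; linarith)

theorem median_of_means_general
    {Ω : Type*} [MeasurableSpace Ω] (P : Measure Ω) [IsProbabilityMeasure P]
    (μ σ ε' γ : ℝ) (hσ : 0 < σ) (hε' : 0 < ε') (hγ0 : 0 < γ)
    (n Q : ℕ)
    (hn : (4 : ℝ) / ε' ^ 2 ≤ n) (hQ : 8 * Real.log (1 / γ) ≤ Q)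
    (Z : Fin Q → Fin n → Ω → ℝ)
    (hmeas : ∀ q i, Measurable (Z q i))
    (hL2 : ∀ q i, MemLp (Z q i) 2 P)
    (hindep : iIndepFun
      (fun qi : Fin Q × Fin n => Z qi.1 qi.2) P)
    (hmean : ∀ q i, ∫ ω, Z q i ω ∂P = μ)
    (hvar : ∀ q i, variance (Z q i) P ≤ σ ^ 2) :
    ENNReal.ofReal (1 - γ)
      ≤ P {ω | |median (fun q => (1 / n : ℝ) * ∑ i, Z q i ω) - μ| ≤ ε' * σ} := by
  have hn0 : 0 < n := by exact_mod_cast (by positivity : (0 : ℝ) < 4 / ε' ^ 2).trans_le hn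
  have : Nonempty (Fin n) := ⟨⟨0, hn0⟩⟩
  have hmeans_indep : iIndepFun (fun q ω ↦ (1 / n : ℝ) * ∑ i, Z q i ω) P :=
    (hindep.curry hmeas).comp (g := fun _ v ↦ (1 / n : ℝ) * ∑ i, v i) fun _ ↦ by fun_prop
  have hratio : σ ^ 2 / (n * (ε' * σ) ^ 2) ≤ 1 / 4 := by
    rw [div_le_div_iff₀ (by positivity) (by norm_num)]
    rw [div_le_iff₀ (by positivity)] at hn
    nlinarith [sq_pos_of_pos hσ]
  have hmeans_bad (q : Fin Q) : P.real
      {ω | (1 / n : ℝ) * ∑ i, Z q i ω ∉ Set.Icc (μ - ε' * σ) (μ + ε' * σ)} ≤ 1 / 4 := by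
    have := measureReal_mean_notMem_Icc_le (hL2 q)
      (fun i j hij ↦ hindep.indepFun (i := (q, i)) (j := (q, j)) (by simpa using hij))
      (hmean q) (hvar q) (mul_pos hε' hσ)
    rw [Fintype.card_fin] at this
    exact this.trans hratio
  have hγ : Real.exp (-Q / 8) ≤ γ := by
    rw [one_div, Real.log_inv] at hQ
    rw [← Real.exp_log hγ0, Real.exp_le_exp]
    linarith
  have hmedian := (measureReal_median_notMem_Icc_le hmeans_indep (fun q ↦ by fun_prop)
    hmeans_bad).trans hγ
  convert ofReal_one_sub_le_measure_compl hmedian using 2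
  ext ω
  rw [Set.mem_compl_iff, Set.mem_ofPred_eq, Set.mem_ofPred_eq, not_not, abs_sub_comm,
    Set.mem_Icc_iff_abs_le]

/-- Median-of-means guarantee: the median of `Q ≥ 8 ln(1/γ)` (odd) independent
averages, each of `n ≥ 4/ε'²` i.i.d. copies of a random variable with mean `μ` and
variance at most `σ²`, lies within `ε'σ` of `μ` with probability at least `1 - γ`. -/
theorem median_of_means
    {Ω : Type*} [MeasurableSpace Ω] (P : Measure Ω) [IsProbabilityMeasure P]
    (μ σ ε' γ : ℝ) (hσ : 0 < σ) (hε' : 0 < ε') (hγ0 : 0 < γ) (hγ1 : γ < 1)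
    (n Q : ℕ) (hn0 : 0 < n) (hQ0 : 0 < Q)
    (hn : (4 : ℝ) / ε' ^ 2 ≤ n) (hQodd : Odd Q) (hQ : 8 * Real.log (1 / γ) ≤ Q)
    (Z : Fin Q → Fin n → Ω → ℝ)
    (hmeas : ∀ q i, Measurable (Z q i))
    (hL2 : ∀ q i, MemLp (Z q i) 2 P)
    (hindep : iIndepFun
      (fun qi : Fin Q × Fin n => Z qi.1 qi.2) P)
    (hident : ∀ q i q' i', IdentDistrib (Z q i) (Z q' i') P P)
    (hmean : ∀ q i, ∫ ω, Z q i ω ∂P = μ)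
    (hvar : ∀ q i, variance (Z q i) P ≤ σ ^ 2) :
    ENNReal.ofReal (1 - γ)
      ≤ P {ω | |median (fun q => (1 / n : ℝ) * ∑ i, Z q i ω) - μ| ≤ ε' * σ} :=
  median_of_means_general P μ σ ε' γ hσ hε' hγ0 n Q hn hQ Z hmeas hL2 hindep hmean hvar
end
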